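/- Let A be an R-transient irreducible nonnegative matrix on a countable set S (with ρ(A) < ∞ and Σ_n ρ(A)^{-n}A^n(x,x) < ∞) and let S' ⊆ S be finite. Then there exists h : S → (0,∞) with Σ_y A(x,y)h(y) ≤ ρ(A)h(x) for all x ∈ S, and with strict inequality Σ_y A(x,y)h(y) < ρ(A)h(x) for all x ∈ S'. -/

import Mathlib

open scoped ENNReal
open Filter

variable {S : Type*}

/-- Matrix powers of a nonnegative (possibly infinite-sum) matrix on a countable set. -/
noncomputable def matPow [DecidableEq S] (A : S → S → ℝ≥0∞) : ℕ → S → S → ℝ≥0∞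
  | 0 => fun x y => if x = y then 1 else 0
  | n + 1 => fun x y => ∑' z, matPow A n x z * A z y

/-!
Let `G(x, z) = ∑ₖ ρ⁻ᵏ Aᵏ(x, z)` be the Green function of `A / ρ`. Splitting off the `k = 0`
term gives `∑_y A(x, y) G(y, z) + ρ 1_{x = z} = ρ G(x, z)`, so `h = ∑_{z ∈ F} G(·, z)` is
`ρ`-excessive with strict defect exactly on `F`. R-transience makes `G(z, z)` finite, and
irreducibility transports finiteness (`Aⁿ(z, x) G(x, z) ≤ ρⁿ G(z, z)`) and positivity to all `x`.
-/

section MatPow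

variable [DecidableEq S] (A : S → S → ℝ≥0∞)

theorem matPow_add (m n : ℕ) (x y : S) :
    matPow A (m + n) x y = ∑' z, matPow A m x z * matPow A n z y := by
  induction n generalizing y with
  | zero =>
    rw [tsum_eq_single y fun z hz => by simp [matPow, hz]]
    simp [matPow]
  | succ n ih =>
    calc matPow A (m + (n + 1)) x y
        = ∑' w, (∑' z, matPow A m x z * matPow A n z w) * A w y := by
          simp only [← ih]; rfl
      _ = ∑' z, matPow A m x z * ∑' w, matPow A n z w * A w y := by
          simp_rw [← ENNReal.tsum_mul_right, ← ENNReal.tsum_mul_left, mul_assoc]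
          exact ENNReal.tsum_comm
      _ = ∑' z, matPow A m x z * matPow A (n + 1) z y := rfl

theorem matPow_one (x y : S) : matPow A 1 x y = A x y := by
  show ∑' z, matPow A 0 x z * A z y = A x y
  rw [tsum_eq_single x fun z hz => by simp [matPow, Ne.symm hz]]
  simp [matPow]

theorem matPow_succ' (n : ℕ) (x y : S) :
    matPow A (n + 1) x y = ∑' z, A x z * matPow A n z y := by
  rw [Nat.add_comm, matPow_add]
  simp_rw [matPow_one]

end MatPow

section Green

variable [DecidableEq S] (A : S → S → ℝ≥0∞) (ρ : ℝ≥0∞)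

noncomputable def green (x z : S) : ℝ≥0∞ :=
  ∑' k : ℕ, ρ⁻¹ ^ k * matPow A k x z

theorem green_eq_ite_add (x z : S) :
    green A ρ x z = (if x = z then 1 else 0) + ∑' k : ℕ, ρ⁻¹ ^ (k + 1) * matPow A (k + 1) x z := by
  rw [green, tsum_eq_zero_add' ENNReal.summable]
  simp [matPow]

theorem tsum_mul_green (x z : S) :
    ∑' y, A x y * green A ρ y z = ∑' k : ℕ, ρ⁻¹ ^ k * matPow A (k + 1) x z := by
  simp_rw [matPow_succ', green, ← ENNReal.tsum_mul_left]
  rw [ENNReal.tsum_comm]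
  exact tsum_congr fun k => tsum_congr fun y => by ring

theorem tsum_mul_green_add (hρ0 : ρ ≠ 0) (hρT : ρ ≠ ⊤) (x z : S) :
    ∑' y, A x y * green A ρ y z + ρ * (if x = z then 1 else 0) = ρ * green A ρ x z := by
  rw [tsum_mul_green, green_eq_ite_add, mul_add, add_comm, ← ENNReal.tsum_mul_left]
  congr 1
  refine tsum_congr fun k => ?_
  rw [pow_succ', ← mul_assoc, ← mul_assoc, ENNReal.mul_inv_cancel hρ0 hρT, one_mul]

theorem pow_mul_matPow_mul_green_le (n : ℕ) (x z : S) :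
    ρ⁻¹ ^ n * matPow A n z x * green A ρ x z ≤ green A ρ z z := by
  calc ρ⁻¹ ^ n * matPow A n z x * green A ρ x z
      = ∑' k, ρ⁻¹ ^ (n + k) * (matPow A n z x * matPow A k x z) := by
        rw [green, ← ENNReal.tsum_mul_left]
        exact tsum_congr fun k => by ring
    _ ≤ ∑' k, ρ⁻¹ ^ (n + k) * matPow A (n + k) z z := by
        gcongr with k
        rw [matPow_add]
        exact ENNReal.le_tsum x
    _ ≤ green A ρ z z :=
        ENNReal.tsum_comp_le_tsum_of_injective (add_right_injective n) _

theorem green_self_ne_top (z : S)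
    (hz : ∑' n : ℕ, ρ⁻¹ ^ (n + 1) * matPow A (n + 1) z z ≠ ⊤) : green A ρ z z ≠ ⊤ := by
  rw [green_eq_ite_add]
  exact ENNReal.add_ne_top.2 ⟨by simp, hz⟩

theorem green_ne_top (hρT : ρ ≠ ⊤) {n : ℕ} {x z : S} (hzx : 0 < matPow A n z x)
    (hzz : green A ρ z z ≠ ⊤) : green A ρ x z ≠ ⊤ := by
  have hc : ρ⁻¹ ^ n * matPow A n z x ≠ 0 :=
    mul_ne_zero (pow_ne_zero _ (ENNReal.inv_ne_zero.2 hρT)) hzx.ne'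
  intro htop
  have hle := pow_mul_matPow_mul_green_le A ρ n x z
  rw [htop, ENNReal.mul_top hc, top_le_iff] at hle
  exact hzz hle

theorem green_pos (hρT : ρ ≠ ⊤) {n : ℕ} {x z : S} (hxz : 0 < matPow A n x z) :
    0 < green A ρ x z :=
  (ENNReal.mul_pos (pow_ne_zero _ (ENNReal.inv_ne_zero.2 hρT)) hxz.ne').trans_le
    (ENNReal.le_tsum n)

theorem tsum_mul_sum_green_add (hρ0 : ρ ≠ 0) (hρT : ρ ≠ ⊤) (F : Finset S) (x : S) :
    ∑' y, A x y * ∑ z ∈ F, green A ρ y z + ρ * (if x ∈ F then 1 else 0)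
      = ρ * ∑ z ∈ F, green A ρ x z := by
  calc _ = ∑ z ∈ F, (∑' y, A x y * green A ρ y z + ρ * if x = z then 1 else 0) := by
        rw [Finset.sum_add_distrib, ← Summable.tsum_finsetSum fun _ _ => ENNReal.summable]
        simp [Finset.mul_sum, Finset.sum_ite_eq]
    _ = _ := by
        rw [Finset.mul_sum]
        exact Finset.sum_congr rfl fun z _ => tsum_mul_green_add A ρ hρ0 hρT x z

end Green

theorem exists_strictly_excessive_function_general [DecidableEq S]
    (A : S → S → ℝ≥0∞)
    (hirr : ∀ x y : S, ∃ n, 1 ≤ n ∧ 0 < matPow A n x y)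
    (ρ : ℝ≥0∞) (hρ0 : 0 < ρ) (hρT : ρ ≠ ⊤)
    (hRtrans : ∀ x, (∑' n : ℕ, ρ⁻¹ ^ (n + 1) * matPow A (n + 1) x x) ≠ ⊤)
    (S' : Set S) (hS' : S'.Finite) :
    ∃ h : S → ℝ≥0∞, (∀ x, 0 < h x) ∧ (∀ x, h x ≠ ⊤) ∧
      (∀ x, ∑' y, A x y * h y ≤ ρ * h x) ∧
      (∀ x ∈ S', ∑' y, A x y * h y < ρ * h x) := by
  rcases isEmpty_or_nonempty S with _ | ⟨⟨z₀⟩⟩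
  · exact ⟨fun _ => 1, isEmptyElim, isEmptyElim, isEmptyElim, fun x => isEmptyElim x⟩
  -- `z₀` keeps `h` positive when `S'` is empty.
  set F := insert z₀ hS'.toFinset
  have hpos (x : S) : 0 < ∑ z ∈ F, green A ρ x z := by
    obtain ⟨n, -, hn⟩ := hirr x z₀
    exact (green_pos A ρ hρT hn).trans_le
      (Finset.single_le_sum (fun _ _ => zero_le) (Finset.mem_insert_self _ _))
  have hfin (x : S) : ∑ z ∈ F, green A ρ x z ≠ ⊤ := by
    refine ENNReal.sum_ne_top.2 fun z _ => ?_
    obtain ⟨n, -, hn⟩ := hirr z x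
    exact green_ne_top A ρ hρT hn (green_self_ne_top A ρ z (hRtrans z))
  have hbal := tsum_mul_sum_green_add A ρ hρ0.ne' hρT F
  have hle (x : S) : ∑' y, A x y * ∑ z ∈ F, green A ρ y z ≤ ρ * ∑ z ∈ F, green A ρ x z :=
    hbal x ▸ le_self_add
  refine ⟨fun x => ∑ z ∈ F, green A ρ x z, hpos, hfin, hle, fun x hx => ?_⟩
  rw [← hbal x, if_pos (Finset.mem_insert_of_mem (hS'.mem_toFinset.2 hx)), mul_one]
  exact ENNReal.lt_add_right (ne_top_of_le_ne_top (ENNReal.mul_ne_top hρT (hfin x)) (hle x))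
    hρ0.ne'

theorem exists_strictly_excessive_function [Countable S] [DecidableEq S]
    (A : S → S → ℝ≥0∞) (hfin : ∀ x y, A x y ≠ ⊤)
    (hirr : ∀ x y : S, ∃ n, 1 ≤ n ∧ 0 < matPow A n x y)
    (ρ : ℝ≥0∞) (hρ0 : 0 < ρ) (hρT : ρ ≠ ⊤)
    (hρ : ∀ x, Tendsto (fun n : ℕ => (matPow A n x x) ^ ((n : ℝ)⁻¹))
        (atTop ⊓ Filter.principal {n : ℕ | 0 < matPow A n x x}) (nhds ρ))
    (hRtrans : ∀ x, (∑' n : ℕ, ρ⁻¹ ^ (n + 1) * matPow A (n + 1) x x) ≠ ⊤)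
    (S' : Set S) (hS' : S'.Finite) :
    ∃ h : S → ℝ≥0∞, (∀ x, 0 < h x) ∧ (∀ x, h x ≠ ⊤) ∧
      (∀ x, ∑' y, A x y * h y ≤ ρ * h x) ∧
      (∀ x ∈ S', ∑' y, A x y * h y < ρ * h x) :=
  exists_strictly_excessive_function_general A hirr ρ hρ0 hρT hRtrans S' hS'
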